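/- Let $a_1, \dots, a_m$ be integers, all $\le -1$, with $m$ odd. Let $q$ be the value of the continued fraction $a_m + 1/(a_{m-1} + 1/(\cdots + 1/a_1))$. Then $\sum_{i=1}^m |a_i| \ge |\lceil q \rceil|$, i.e., the total number of half twists is at least the absolute value of the integer part of the tangle fraction. -/
import Mathlib


/-- The total number of half twists is at least the absolute value of the ceiling
    of the tangle fraction. -/
theorem stmt_7 (m : ℕ) (hm : 1 ≤ m) (hodd : Odd m) (a : ℕ → ℤ) (ha : ∀ i, a i ≤ -1)
    (q : ℕ → ℚ) (h1 : q 1 = a 1)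
    (hrec : ∀ k, 2 ≤ k → k ≤ m → q k = a k + 1 / q (k - 1)) :
    |⌈q m⌉| ≤ ∑ i ∈ Finset.Icc 1 m, |a i| := by
  have ha' : ∀ i, (a i : ℚ) ≤ -1 := by
    intro i
    exact_mod_cast (by exact_mod_cast ha i : (a i : ℚ) ≤ -1)
  have qneg : ∀ k, 1 ≤ k → k ≤ m → q k ≤ -1 := by
    intro k
    induction k with
    | zero => intro h; omega
    | succ n ih =>
      intro _ hkm
      rcases Nat.eq_zero_or_pos n with hn | hn
      · subst hn; rw [h1]; exact ha' 1
      · have h2 : 2 ≤ n + 1 := by omega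
        have hq := hrec (n + 1) h2 hkm
        have hqn : q n ≤ -1 := ih hn (by omega)
        have hqn0 : q n < 0 := by linarith
        have hinv : 1 / q n < 0 := one_div_neg.mpr hqn0
        simp only [Nat.add_sub_cancel] at hq
        rw [hq]
        linarith [ha' (n + 1)]
  rcases Nat.eq_or_lt_of_le hm with hm1 | hm2
  · subst hm1
    rw [h1, Int.ceil_intCast]
    simp
  · -- m ≥ 2
    have hq := hrec m hm2 le_rfl
    have hqm1 : q (m - 1) ≤ -1 := qneg (m - 1) (by omega) (by omega)
    have hqm10 : q (m - 1) < 0 := by linarith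
    have hinvlt : 1 / q (m - 1) < 0 := one_div_neg.mpr hqm10
    have hinvge : -1 ≤ 1 / q (m - 1) := by
      rw [le_div_iff_of_neg hqm10]
      linarith
    have hub : q m < a m := by rw [hq]; linarith
    have hlb : (a m : ℚ) - 1 ≤ q m := by rw [hq]; linarith
    have hceil_ub : ⌈q m⌉ ≤ a m := Int.ceil_le.mpr (le_of_lt hub)
    have hceil_lb : a m - 1 ≤ ⌈q m⌉ := by
      have := Int.le_ceil (q m)
      have : ((a m - 1 : ℤ) : ℚ) ≤ (⌈q m⌉ : ℚ) := by push_cast; linarith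
      exact_mod_cast this
    have habs : |⌈q m⌉| = -⌈q m⌉ := abs_of_nonpos (by linarith [ha m])
    have hsub : ({1, m} : Finset ℕ) ⊆ Finset.Icc 1 m := by
      intro x hx
      simp only [Finset.mem_insert, Finset.mem_singleton] at hx
      rcases hx with h | h <;> simp [h] <;> omega
    have hsum : ∑ i ∈ ({1, m} : Finset ℕ), |a i| ≤ ∑ i ∈ Finset.Icc 1 m, |a i| :=
      Finset.sum_le_sum_of_subset_of_nonneg hsub (fun i _ _ => abs_nonneg _)
    have hpair : ∑ i ∈ ({1, m} : Finset ℕ), |a i| = |a 1| + |a m| := by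
      rw [Finset.sum_pair (by omega : (1 : ℕ) ≠ m)]
    have h1abs : |a 1| = -a 1 := abs_of_nonpos (by linarith [ha 1])
    have hmabs : |a m| = -a m := abs_of_nonpos (by linarith [ha m])
    have := ha 1
    omega
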